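/- arXiv:2108.04842 — 5 statements merged into one kernel-verified Lean document; each statement's English description precedes it below -/
import Mathlib

section
/- Let c, d > 0 be real numbers with c·d ≤ 1/4, and let (zₙ) be a sequence of positive reals with z₀ ≤ 1/(2d) and z_{n+1} ≤ c + d·zₙ² for all n ≥ 0. Then for all n ≥ log₂(1/(cd)) − 1, we have zₙ ≤ 3c. -/
/-!
After rescaling `w n = d * z n` and `ε = c * d` the recursion becomes `w (n+1) ≤ ε + (w n)^2`
with `w 0 ≤ 1/2` and `ε ≤ 1/4`. The interval `[0, 1/2]` is then invariant, and on it
`(w n)^2 ≤ w n / 2`, so the excess `w n - 2ε` at least halves in every step. After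
`n + 1 ≥ log₂(1/ε)` steps it is at most `ε`, i.e. `w n ≤ 3ε`.
-/

namespace QuadraticRecursion

variable {ε : ℝ} {w : ℕ → ℝ}

theorem le_half (hw : ∀ n, 0 ≤ w n) (hrec : ∀ n, w (n + 1) ≤ ε + w n ^ 2)
    (hε : ε ≤ 1 / 4) (h0 : w 0 ≤ 1 / 2) (n : ℕ) : w n ≤ 1 / 2 := by
  induction n with
  | zero => exact h0
  | succ n ih =>
    have hsq : w n ^ 2 ≤ (1 / 2) ^ 2 := pow_le_pow_left₀ (hw n) ih 2
    linarith [hrec n]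

theorem sub_two_mul_le_half_pow (hw : ∀ n, 0 ≤ w n) (hrec : ∀ n, w (n + 1) ≤ ε + w n ^ 2)
    (hε₀ : 0 ≤ ε) (hε : ε ≤ 1 / 4) (h0 : w 0 ≤ 1 / 2) (n : ℕ) :
    w n - 2 * ε ≤ (1 / 2) ^ (n + 1) := by
  induction n with
  | zero => norm_num; linarith
  | succ n ih =>
    have hsq : w n ^ 2 ≤ w n / 2 := by nlinarith [hw n, le_half hw hrec hε h0 n]
    calc w (n + 1) - 2 * ε ≤ (w n - 2 * ε) / 2 := by linarith [hrec n]
      _ ≤ (1 / 2) ^ (n + 1) / 2 := by linarith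
      _ = (1 / 2) ^ (n + 1 + 1) := by ring

theorem half_pow_le_of_logb_le {n : ℕ} (hε : 0 < ε) (hn : Real.logb 2 (1 / ε) - 1 ≤ n) :
    (1 / 2 : ℝ) ^ (n + 1) ≤ ε := by
  have hle : 1 / ε ≤ 2 ^ (n + 1) := by
    have := (Real.logb_le_iff_le_rpow one_lt_two (by positivity)).mp
      (by push_cast; linarith : Real.logb 2 (1 / ε) ≤ ((n + 1 : ℕ) : ℝ))
    rwa [Real.rpow_natCast] at this
  rw [div_pow, one_pow, div_le_iff₀ (by positivity)]
  rwa [div_le_iff₀ hε, mul_comm] at hle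

theorem le_three_mul (hw : ∀ n, 0 ≤ w n) (hrec : ∀ n, w (n + 1) ≤ ε + w n ^ 2)
    (hε₀ : 0 < ε) (hε : ε ≤ 1 / 4) (h0 : w 0 ≤ 1 / 2) {n : ℕ}
    (hn : Real.logb 2 (1 / ε) - 1 ≤ n) : w n ≤ 3 * ε := by
  linarith [sub_two_mul_le_half_pow hw hrec hε₀.le hε h0 n, half_pow_le_of_logb_le hε₀ hn]

end QuadraticRecursion

/-- If `c, d > 0` with `c * d ≤ 1/4`, and `z` is a sequence of positive reals with
`z 0 ≤ 1/(2d)` and `z (n+1) ≤ c + d * (z n)^2`, then `z n ≤ 3c` for all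
`n ≥ log₂(1/(cd)) − 1`. -/
theorem stmt1 (c d : ℝ) (hc : 0 < c) (hd : 0 < d) (hcd : c * d ≤ 1 / 4)
    (z : ℕ → ℝ) (hz : ∀ n, 0 < z n) (hz0 : z 0 ≤ 1 / (2 * d))
    (hrec : ∀ n, z (n + 1) ≤ c + d * (z n) ^ 2) :
    ∀ n : ℕ, Real.logb 2 (1 / (c * d)) - 1 ≤ (n : ℝ) → z n ≤ 3 * c := by
  intro n hn
  have hw : ∀ n, 0 ≤ d * z n := fun n => (mul_pos hd (hz n)).le
  have hwrec : ∀ n, d * z (n + 1) ≤ c * d + (d * z n) ^ 2 := fun n => by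
    nlinarith [mul_le_mul_of_nonneg_left (hrec n) hd.le]
  have hw0 : d * z 0 ≤ 1 / 2 := by
    calc d * z 0 ≤ d * (1 / (2 * d)) := mul_le_mul_of_nonneg_left hz0 hd.le
      _ = 1 / 2 := by field_simp
  have := QuadraticRecursion.le_three_mul hw hwrec (mul_pos hc hd) hcd hw0 hn
  exact le_of_mul_le_mul_left (by linarith) hd
end

section
/- For any real numbers x and y, |σ(x) − σ(y)| ≥ exp(−|x| − 3) · min(1, |x − y|), where σ(t) = e^t/(1 + e^t) is the sigmoid function. -/
/-!
Since `σ' = σ (1 - σ) = σ(|t|)² e^{-|t|} ≥ e^{-|t|} / 4`, the mean value theorem shows that `σ`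
grows at rate at least `e^{-|x|-1} / 4 ≥ e^{-|x|-3}` on `[x, x + 1]`. Moving from `x` towards `y`
by `min 1 |x - y|` gives the bound when `x ≤ y`; the case `y < x` follows from `σ(-t) = 1 - σ(t)`.
-/

open Set

namespace Real

lemma exp_div_one_add_exp_eq_sigmoid (x : ℝ) : exp x / (1 + exp x) = sigmoid x := by
  rw [sigmoid_def, exp_neg]
  field_simp
  ring

lemma sigmoid_mul_one_sub_sigmoid_eq (x : ℝ) :
    sigmoid x * (1 - sigmoid x) = sigmoid |x| ^ 2 * exp (-|x|) := by
  have : sigmoid x * (1 - sigmoid x) = sigmoid |x| * sigmoid (-|x|) := by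
    rcases abs_choice x with h | h <;> rw [h]
    · rw [sigmoid_neg]
    · rw [neg_neg, sigmoid_neg, mul_comm]
  rw [this, ← sigmoid_mul_rexp_neg, sq, mul_assoc]

lemma exp_neg_abs_div_four_le_sigmoid_mul_one_sub_sigmoid (x : ℝ) :
    exp (-|x|) / 4 ≤ sigmoid x * (1 - sigmoid x) := by
  have half_le : 2⁻¹ ≤ sigmoid |x| := sigmoid_zero ▸ sigmoid_le (abs_nonneg x)
  have : (4 : ℝ)⁻¹ ≤ sigmoid |x| ^ 2 := by nlinarith
  rw [sigmoid_mul_one_sub_sigmoid_eq, div_eq_inv_mul]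
  exact mul_le_mul_of_nonneg_right this (exp_pos _).le

lemma exp_neg_max_abs_div_four_mul_sub_le_sigmoid_sub {a b : ℝ} (hab : a ≤ b) :
    exp (-max |a| |b|) / 4 * (b - a) ≤ sigmoid b - sigmoid a := by
  refine (convex_Icc a b).mul_sub_le_image_sub_of_le_deriv continuous_sigmoid.continuousOn
    differentiable_sigmoid.differentiableOn (fun t ht => ?_) a (left_mem_Icc.2 hab) b
    (right_mem_Icc.2 hab) hab
  rw [interior_Icc] at ht
  rw [deriv_sigmoid]
  refine le_trans ?_ (exp_neg_abs_div_four_le_sigmoid_mul_one_sub_sigmoid t)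
  gcongr
  exact abs_le_max_abs_abs ht.1.le ht.2.le

lemma exp_neg_two_le_inv_four : exp (-2) ≤ 4⁻¹ := by
  rw [exp_neg, inv_le_inv₀ (exp_pos 2) (by norm_num), show (2 : ℝ) = 1 + 1 by norm_num, exp_add]
  nlinarith [exp_one_gt_two]

lemma exp_neg_abs_sub_three_mul_min_le_sigmoid_sub {x y : ℝ} (hxy : x ≤ y) :
    exp (-|x| - 3) * min 1 |x - y| ≤ sigmoid y - sigmoid x := by
  set z := min y (x + 1)
  have hxz : x ≤ z := le_min hxy (by linarith)
  have hz_sub : z - x = min 1 |x - y| := by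
    rw [abs_sub_comm, abs_of_nonneg (sub_nonneg.2 hxy), min_comm, ← min_sub_sub_right]
    ring_nf
  have hmax : max |x| |z| ≤ |x| + 1 := by
    refine max_le (by linarith) (abs_le.2 ⟨?_, ?_⟩)
    · linarith [neg_abs_le x]
    · linarith [min_le_right y (x + 1), le_abs_self x]
  calc exp (-|x| - 3) * min 1 |x - y|
      ≤ exp (-max |x| |z|) / 4 * (z - x) := by
        rw [hz_sub]
        gcongr
        calc exp (-|x| - 3) = exp (-(|x| + 1)) * exp (-2) := by rw [← exp_add]; ring_nf
          _ ≤ exp (-max |x| |z|) * 4⁻¹ := by gcongr; exact exp_neg_two_le_inv_four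
    _ ≤ sigmoid z - sigmoid x := exp_neg_max_abs_div_four_mul_sub_le_sigmoid_sub hxz
    _ ≤ sigmoid y - sigmoid x := by gcongr; exact min_le_left _ _

end Real

open Real

/-- Anti-Lipschitz bound for the sigmoid `σ(t) = exp t / (1 + exp t)`:
`|σ x − σ y| ≥ exp(−|x| − 3) * min 1 |x − y|`. -/
theorem stmt3 (x y : ℝ) :
    Real.exp (-|x| - 3) * min 1 |x - y| ≤
      |Real.exp x / (1 + Real.exp x) - Real.exp y / (1 + Real.exp y)| := by
  simp only [exp_div_one_add_exp_eq_sigmoid]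
  rcases le_total x y with hxy | hyx
  · rw [abs_sub_comm (sigmoid x), abs_of_nonneg (sub_nonneg.2 (sigmoid_le hxy))]
    exact exp_neg_abs_sub_three_mul_min_le_sigmoid_sub hxy
  · have := exp_neg_abs_sub_three_mul_min_le_sigmoid_sub (neg_le_neg hyx)
    rwa [abs_neg, sigmoid_neg, sigmoid_neg, sub_sub_sub_cancel_left, neg_sub_neg, abs_sub_comm,
      ← abs_of_nonneg (sub_nonneg.2 (sigmoid_le hyx))] at this
end

section
/- For every n ≥ 2 and d ≥ 2, binomial(n(d−1)+1, n−1) · d/(n(d−1)+1) ≤ e·d·(e(d−1))^{n−1}. -/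
/-- For integers `n, d ≥ 2`,
`binom(n(d−1)+1, n−1) · d/(n(d−1)+1) ≤ e·d·(e(d−1))^{n−1}`. -/
theorem stmt4 (n d : ℕ) (hn : 2 ≤ n) (hd : 2 ≤ d) :
    ((n * (d - 1) + 1).choose (n - 1) : ℝ) * d / (n * (d - 1) + 1) ≤
      Real.exp 1 * d * (Real.exp 1 * ((d : ℝ) - 1)) ^ (n - 1) := by
  have hd' : (2:ℝ) ≤ (d:ℝ) := by exact_mod_cast hd
  have hn' : (2:ℝ) ≤ (n:ℝ) := by exact_mod_cast hn
  set k := n - 1 with hk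
  set m := n * (d - 1) + 1 with hm
  have hkr : ((k:ℕ):ℝ) = (n:ℝ) - 1 := by
    rw [hk]; push_cast [Nat.cast_sub (show 1 ≤ n by omega)]; ring
  have hmr : ((m:ℕ):ℝ) = (n:ℝ) * ((d:ℝ) - 1) + 1 := by
    rw [hm]; push_cast [Nat.cast_sub (show 1 ≤ d by omega)]; ring
  have hkr1 : (1:ℝ) ≤ (k:ℝ) := by rw [hkr]; linarith
  have he1 : (1:ℝ) ≤ (d:ℝ) - 1 := by linarith
  have hm3 : (3:ℝ) ≤ (m:ℝ) := by rw [hmr]; nlinarith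
  have hmpos : (0:ℝ) < (m:ℝ) := by linarith
  have hFpos : (0:ℝ) < ((Nat.factorial k) : ℝ) := by exact_mod_cast k.factorial_pos
  have hKpos : (0:ℝ) < (k:ℝ) * ((d:ℝ) - 1) := by nlinarith
  set e1 := Real.exp 1 with he1def
  have he1pos : 0 < e1 := Real.exp_pos 1
  -- Step A : choose ≤ m^k / k!
  have hA : ((m.choose k : ℕ):ℝ) ≤ (m:ℝ) ^ k / ((Nat.factorial k) : ℝ) := Nat.choose_le_pow_div k m
  -- Step B : k^k ≤ e^k * k!
  have hB : ((k:ℝ)) ^ k ≤ e1 ^ k * ((Nat.factorial k) : ℝ) := by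
    have h := Real.pow_div_factorial_le_exp (x := (k:ℝ)) (by positivity) k
    have hek : Real.exp ((k:ℝ)) = e1 ^ k := by
      rw [he1def, ← Real.exp_nat_mul]; norm_num
    rw [div_le_iff₀ hFpos] at h
    calc ((k:ℝ)) ^ k ≤ Real.exp ((k:ℝ)) * ((Nat.factorial k) : ℝ) := h
      _ = e1 ^ k * ((Nat.factorial k) : ℝ) := by rw [hek]
  -- Step M : m^k ≤ e * m * (k(d-1))^k
  have hM : (m:ℝ) ^ k ≤ e1 * (m:ℝ) * ((k:ℝ) * ((d:ℝ) - 1)) ^ k := by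
    set K := (k:ℝ) * ((d:ℝ) - 1) with hKdef
    set r := (m:ℝ) / K with hrdef
    have hrK : (m:ℝ) = K * r := by rw [hrdef]; field_simp
    have hrpos : 0 < r := by positivity
    have hr1 : (r - 1) * (k:ℝ) = (d:ℝ) / ((d:ℝ) - 1) := by
      have h1 : (n:ℝ) - 1 ≠ 0 := by linarith
      have h2 : (d:ℝ) - 1 ≠ 0 := by linarith
      rw [hrdef, hKdef, hmr, hkr]
      field_simp
      ring
    have hrk : r ^ k ≤ Real.exp ((r - 1) * (k:ℝ)) := by
      calc r ^ k ≤ Real.exp (r - 1) ^ k := by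
            apply pow_le_pow_left₀ hrpos.le
            linarith [Real.add_one_le_exp (r - 1)]
        _ = Real.exp ((r - 1) * (k:ℝ)) := by
            rw [← Real.exp_nat_mul]; ring_nf
    have hdd : (d:ℝ) / ((d:ℝ) - 1) ≤ 2 := by
      rw [div_le_iff₀ (by linarith)]; linarith
    have hexp2 : Real.exp ((r - 1) * (k:ℝ)) ≤ e1 * (m:ℝ) := by
      rw [hr1]
      calc Real.exp ((d:ℝ) / ((d:ℝ) - 1)) ≤ Real.exp 2 := Real.exp_le_exp.2 hdd
        _ = e1 * e1 := by rw [he1def, ← Real.exp_add]; norm_num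
        _ ≤ e1 * (m:ℝ) := by
            have : e1 < 2.7182818286 := Real.exp_one_lt_d9
            nlinarith
    calc (m:ℝ) ^ k = (K * r) ^ k := by rw [← hrK]
      _ = K ^ k * r ^ k := mul_pow K r k
      _ ≤ K ^ k * (e1 * (m:ℝ)) := by
          apply mul_le_mul_of_nonneg_left (hrk.trans hexp2) (by positivity)
      _ = e1 * (m:ℝ) * K ^ k := by ring
  -- combine : choose ≤ e * m * (e(d-1))^k
  have hC : ((m.choose k : ℕ):ℝ) ≤ e1 * (m:ℝ) * (e1 * ((d:ℝ) - 1)) ^ k := by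
    calc ((m.choose k : ℕ):ℝ) ≤ (m:ℝ) ^ k / ((Nat.factorial k) : ℝ) := hA
      _ ≤ e1 * (m:ℝ) * ((k:ℝ) * ((d:ℝ) - 1)) ^ k / ((Nat.factorial k) : ℝ) := by
          gcongr
      _ = e1 * (m:ℝ) * ((d:ℝ) - 1) ^ k * ((k:ℝ) ^ k / ((Nat.factorial k) : ℝ)) := by
          rw [mul_pow]; ring
      _ ≤ e1 * (m:ℝ) * ((d:ℝ) - 1) ^ k * (e1 ^ k) := by
          apply mul_le_mul_of_nonneg_left _ (by positivity)
          rw [div_le_iff₀ hFpos]; exact hB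
      _ = e1 * (m:ℝ) * (e1 * ((d:ℝ) - 1)) ^ k := by rw [mul_pow]; ring
  have hgoal : ((m.choose k : ℕ):ℝ) * d / ((m:ℕ):ℝ) ≤
      e1 * d * (e1 * ((d : ℝ) - 1)) ^ k := by
    rw [div_le_iff₀ hmpos]
    calc ((m.choose k : ℕ):ℝ) * d ≤ (e1 * (m:ℝ) * (e1 * ((d:ℝ) - 1)) ^ k) * d := by
          apply mul_le_mul_of_nonneg_right hC (by positivity)
      _ = e1 * d * (e1 * ((d : ℝ) - 1)) ^ k * (m:ℝ) := by ring
  calc ((m.choose k : ℕ):ℝ) * d / ((n:ℝ) * ((d:ℝ) - 1) + 1)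
      = ((m.choose k : ℕ):ℝ) * d / ((m:ℕ):ℝ) := by rw [hmr]
    _ ≤ e1 * d * (e1 * ((d : ℝ) - 1)) ^ k := hgoal
end

section
/- Fix β > 0 and ε ∈ (0, 1/2]. Consider the probability distributions q₀ ∝ (e^{2β}, 1, e^{−β}, e^{−β}) and q₁ ∝ (e^{2β}, 1, e^{−β+2βε}, e^{−β−2βε}) on four outcomes. Then the KL divergence satisfies D(q₁ ‖ q₀) ≤ 8 β² ε² e^{−2β}. -/
/-!
Let `q_t` be the normalization of the weights `(e^{2β}, 1, e^{-β+t}, e^{-β-t})`, with normalizing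
constant `Z_t`, so that `q₀ = q_0` and `q₁ = q_{2βε}`. Since only the last two weights change,
`D(q_t ‖ q_0) = t (e^{-β+t} - e^{-β-t}) / Z_t + log (Z_0 / Z_t)`. The logarithm is nonpositive
because `Z_t - Z_0 = 2 e^{-β} (cosh t - 1) ≥ 0`. For the first term, `e^t - e^{-t} ≤ 2t e^t` (from
`1 - 2t ≤ e^{-2t}`) and `Z_t ≥ e^{2β}` give the bound `2t² e^{-β+t} e^{-2β}`, which is at most
`2t² e^{-2β} = 8β²ε² e^{-2β}` because `t = 2βε ≤ β`.
-/

open Real Finset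

theorem sum_normalize_mul_log_div_normalize {ι : Type*} [Fintype ι] [Nonempty ι] {w v : ι → ℝ}
    (hw : ∀ i, 0 < w i) (hv : ∀ i, 0 < v i) :
    ∑ i, w i / (∑ j, w j) * log ((w i / ∑ j, w j) / (v i / ∑ j, v j)) =
      ∑ i, w i / (∑ j, w j) * log (w i / v i) + log ((∑ j, v j) / ∑ j, w j) := by
  have hW : 0 < ∑ j, w j := sum_pos (fun i _ => hw i) univ_nonempty
  have hV : 0 < ∑ j, v j := sum_pos (fun i _ => hv i) univ_nonempty
  have hlog (i : ι) : log ((w i / ∑ j, w j) / (v i / ∑ j, v j)) =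
      log (w i / v i) + log ((∑ j, v j) / ∑ j, w j) := by
    rw [← log_mul (div_pos (hw i) (hv i)).ne' (div_pos hV hW).ne']
    congr 1
    field_simp
  simp only [hlog, mul_add, sum_add_distrib, ← sum_mul, ← sum_div, div_self hW.ne', one_mul]

theorem two_mul_exp_le_exp_add_add_exp_sub (a t : ℝ) : 2 * exp a ≤ exp (a + t) + exp (a - t) := by
  have h : exp (a + t) + exp (a - t) = 2 * exp a * cosh t := by
    rw [cosh_eq, exp_add, exp_sub, exp_neg]; field_simp
  rw [h]
  nlinarith [one_le_cosh t, exp_pos a]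

theorem exp_sub_exp_neg_le (t : ℝ) : exp t - exp (-t) ≤ 2 * t * exp t := by
  have h := add_one_le_exp (-(2 * t))
  have h2 : exp (-(2 * t)) * exp t = exp (-t) := by rw [← exp_add]; ring_nf
  nlinarith [exp_pos t]

theorem mul_exp_add_sub_exp_sub_le {t : ℝ} (ht : 0 ≤ t) (a : ℝ) :
    t * (exp (a + t) - exp (a - t)) ≤ 2 * t ^ 2 * exp (a + t) := by
  have h : exp (a + t) - exp (a - t) = exp a * (exp t - exp (-t)) := by
    rw [exp_add, exp_sub, exp_neg]; field_simp
  calc t * (exp (a + t) - exp (a - t)) = t * exp a * (exp t - exp (-t)) := by rw [h]; ring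
    _ ≤ t * exp a * (2 * t * exp t) := by gcongr; exact exp_sub_exp_neg_le t
    _ = 2 * t ^ 2 * exp (a + t) := by rw [exp_add]; ring

noncomputable def tiltedWeights (β t : ℝ) : Fin 4 → ℝ := ![exp (2 * β), 1, exp (-β + t), exp (-β - t)]

section tiltedWeights

variable (β t : ℝ)

theorem tiltedWeights_pos (j : Fin 4) : 0 < tiltedWeights β t j := by
  fin_cases j <;> simp [tiltedWeights, exp_pos]

theorem sum_tiltedWeights :
    ∑ j, tiltedWeights β t j = exp (2 * β) + 1 + (exp (-β + t) + exp (-β - t)) := by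
  simp [tiltedWeights, Fin.sum_univ_four, add_assoc]

theorem sum_tiltedWeights_zero_le : ∑ j, tiltedWeights β 0 j ≤ ∑ j, tiltedWeights β t j := by
  simpa [sum_tiltedWeights, ← two_mul] using two_mul_exp_le_exp_add_add_exp_sub (-β) t

theorem exp_two_mul_le_sum_tiltedWeights : exp (2 * β) ≤ ∑ j, tiltedWeights β t j := by
  rw [sum_tiltedWeights]
  linarith [exp_pos (-β + t), exp_pos (-β - t)]

theorem sum_mul_log_tiltedWeights_div :
    ∑ j, tiltedWeights β t j / (∑ k, tiltedWeights β t k) *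
        log (tiltedWeights β t j / tiltedWeights β 0 j) =
      t * (exp (-β + t) - exp (-β - t)) / ∑ k, tiltedWeights β t k := by
  simp only [Fin.sum_univ_four, tiltedWeights, Matrix.cons_val,
    div_self (exp_pos _).ne', div_one, log_one, mul_zero, zero_add, add_zero, sub_zero,
    ← exp_sub, log_exp]
  ring

theorem sum_mul_log_tiltedWeights_le (ht : 0 ≤ t) (htβ : t ≤ β) :
    ∑ j, tiltedWeights β t j / (∑ k, tiltedWeights β t k) *
        log ((tiltedWeights β t j / ∑ k, tiltedWeights β t k) /
          (tiltedWeights β 0 j / ∑ k, tiltedWeights β 0 k)) ≤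
      2 * t ^ 2 * exp (-2 * β) := by
  rw [sum_normalize_mul_log_div_normalize (tiltedWeights_pos β t) (tiltedWeights_pos β 0),
    sum_mul_log_tiltedWeights_div]
  have hZ_ge := exp_two_mul_le_sum_tiltedWeights β t
  have hlog : log ((∑ k, tiltedWeights β 0 k) / ∑ k, tiltedWeights β t k) ≤ 0 :=
    log_nonpos (div_nonneg (sum_nonneg fun j _ => (tiltedWeights_pos β 0 j).le)
      (sum_nonneg fun j _ => (tiltedWeights_pos β t j).le))
      (div_le_one_of_le₀ (sum_tiltedWeights_zero_le β t) (by linarith [exp_pos (2 * β)]))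
  have hexp : exp (-β + t) ≤ 1 := exp_le_one_iff.mpr (by linarith)
  calc _ ≤ 2 * t ^ 2 * exp (-β + t) / exp (2 * β) + 0 :=
        add_le_add (div_le_div₀ (by positivity) (mul_exp_add_sub_exp_sub_le ht (-β)) (exp_pos _)
          hZ_ge) hlog
    _ ≤ 2 * t ^ 2 * 1 / exp (2 * β) + 0 := by gcongr
    _ = 2 * t ^ 2 * exp (-2 * β) := by rw [neg_mul, exp_neg]; ring

end tiltedWeights

/-- KL divergence bound `D(q₁‖q₀) ≤ 8β²ε²e^{−2β}` for the Gibbs distributions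
`q₀ ∝ (e^{2β}, 1, e^{−β}, e^{−β})` and `q₁ ∝ (e^{2β}, 1, e^{−β+2βε}, e^{−β−2βε})`,
when `0 < ε ≤ 1/2`. -/
theorem stmt11 (β ε : ℝ) (hβ : 0 < β) (hε : 0 < ε) (hε' : ε ≤ 1 / 2) :
    let Z₀ : ℝ := exp (2 * β) + 1 + 2 * exp (-β)
    let Z₁ : ℝ := exp (2 * β) + 1 + exp (-β + 2 * β * ε) + exp (-β - 2 * β * ε)
    let q₀ : Fin 4 → ℝ := fun j => ![exp (2 * β), 1, exp (-β), exp (-β)] j / Z₀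
    let q₁ : Fin 4 → ℝ := fun j =>
      ![exp (2 * β), 1, exp (-β + 2 * β * ε), exp (-β - 2 * β * ε)] j / Z₁
    ∑ j, q₁ j * Real.log (q₁ j / q₀ j) ≤ 8 * β ^ 2 * ε ^ 2 * exp (-2 * β) := by
  intro Z₀ Z₁ q₀ q₁
  have hq₀ : q₀ = fun j => tiltedWeights β 0 j / ∑ k, tiltedWeights β 0 k := by
    funext j
    rw [sum_tiltedWeights]
    fin_cases j <;> simp [q₀, Z₀, tiltedWeights, two_mul]
  have hq₁ : q₁ = fun j => tiltedWeights β (2 * β * ε) j / ∑ k, tiltedWeights β (2 * β * ε) k := by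
    funext j
    rw [sum_tiltedWeights]
    fin_cases j <;> simp [q₁, Z₁, tiltedWeights, add_assoc]
  rw [hq₀, hq₁]
  exact (sum_mul_log_tiltedWeights_le β (2 * β * ε) (by positivity) (by nlinarith)).trans_eq
    (by ring)
end

section
/- Fix β > 0 and ε > 0. For the distributions q₀ ∝ (e^{2β}, 1, e^{−β}, e^{−β}) and q₁ ∝ (e^{2β}, 1, e^{−β+2βε}, e^{−β−2βε}), we have D(q₁ ‖ q₀) ≤ 8 β² ε² e^{−3β+2βε}. -/
/-!
Write `qₖ = wₖ / Zₖ`. Bounding `log (Z₀ / Z₁) ≤ Z₀ / Z₁ - 1` turns `D(q₁ ‖ q₀)` into the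
unnormalized divergence `∑ w₀ klFun (w₁ / w₀)`, divided by `Z₁ ≥ e^{2β}`. Only the last two
weights differ, by factors `e^{±t}` with `t = 2βε`, and `klFun (e^{±t}) ≤ t² e^t`.
-/

open Real InformationTheory

theorem klFun_exp (s : ℝ) : klFun (exp s) = s * exp s + 1 - exp s := by
  rw [klFun_apply, log_exp, mul_comm]

theorem klFun_exp_le_sq_mul_exp {t : ℝ} (ht : 0 ≤ t) : klFun (exp t) ≤ t ^ 2 * exp t := by
  rw [klFun_exp]
  -- `(1 + t) * (1 - t + t ^ 2) = 1 + t ^ 3`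
  have h : (1 + t) * (1 - t + t ^ 2) ≤ exp t * (1 - t + t ^ 2) :=
    mul_le_mul_of_nonneg_right (by linarith [add_one_le_exp t]) (by nlinarith [sq_nonneg (t - 1)])
  nlinarith [pow_nonneg ht 3]

theorem klFun_exp_neg_le_sq {t : ℝ} (ht : -1 ≤ t) : klFun (exp (-t)) ≤ t ^ 2 := by
  rw [klFun_exp]
  have h : (1 + t) * (1 - t) ≤ (1 + t) * exp (-t) :=
    mul_le_mul_of_nonneg_left (by linarith [add_one_le_exp (-t)]) (by linarith)
  nlinarith

theorem sum_mul_log_normalized_le_sum_mul_klFun {ι : Type*} [Fintype ι] [Nonempty ι]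
    {w₀ w₁ : ι → ℝ} {Z₀ Z₁ : ℝ} (h₀ : ∀ i, 0 < w₀ i) (h₁ : ∀ i, 0 < w₁ i) (hZ₀ : ∑ i, w₀ i = Z₀)
    (hZ₁ : ∑ i, w₁ i = Z₁) :
    ∑ i, w₁ i / Z₁ * log (w₁ i / Z₁ / (w₀ i / Z₀)) ≤ (∑ i, w₀ i * klFun (w₁ i / w₀ i)) / Z₁ := by
  have hZ₀pos : 0 < Z₀ := hZ₀ ▸ Finset.sum_pos (fun i _ => h₀ i) Finset.univ_nonempty
  have hZ₁pos : 0 < Z₁ := hZ₁ ▸ Finset.sum_pos (fun i _ => h₁ i) Finset.univ_nonempty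
  have hlog : ∀ i, log (w₁ i / Z₁ / (w₀ i / Z₀)) = log (w₁ i / w₀ i) + log (Z₀ / Z₁) := by
    intro i
    rw [← log_mul (div_pos (h₁ i) (h₀ i)).ne' (div_pos hZ₀pos hZ₁pos).ne']
    congr 1
    field_simp
  have hkl : ∀ i, w₀ i * klFun (w₁ i / w₀ i) = w₁ i * log (w₁ i / w₀ i) + w₀ i - w₁ i := by
    intro i
    rw [klFun_apply]
    field_simp [(h₀ i).ne']
  calc ∑ i, w₁ i / Z₁ * log (w₁ i / Z₁ / (w₀ i / Z₀))
      = (∑ i, w₁ i * log (w₁ i / w₀ i)) / Z₁ + log (Z₀ / Z₁) := by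
        simp only [hlog, mul_add, Finset.sum_add_distrib, ← Finset.sum_mul, ← Finset.sum_div, hZ₁,
          div_self hZ₁pos.ne', one_mul]
        congr 1
        rw [Finset.sum_div]
        exact Finset.sum_congr rfl fun i _ => by ring
    _ ≤ (∑ i, w₁ i * log (w₁ i / w₀ i)) / Z₁ + (Z₀ / Z₁ - 1) := by
        gcongr
        exact log_le_sub_one_of_pos (div_pos hZ₀pos hZ₁pos)
    _ = (∑ i, w₀ i * klFun (w₁ i / w₀ i)) / Z₁ := by
        simp only [hkl, Finset.sum_sub_distrib, Finset.sum_add_distrib, hZ₀, hZ₁]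
        field_simp
        ring

/-- KL divergence bound `D(q₁‖q₀) ≤ 8β²ε²e^{−3β+2βε}` for the Gibbs distributions
`q₀ ∝ (e^{2β}, 1, e^{−β}, e^{−β})` and `q₁ ∝ (e^{2β}, 1, e^{−β+2βε}, e^{−β−2βε})`,
for any `β, ε > 0`. -/
theorem stmt12 (β ε : ℝ) (hβ : 0 < β) (hε : 0 < ε) :
    let Z₀ : ℝ := exp (2 * β) + 1 + 2 * exp (-β)
    let Z₁ : ℝ := exp (2 * β) + 1 + exp (-β + 2 * β * ε) + exp (-β - 2 * β * ε)
    let q₀ : Fin 4 → ℝ := fun j => ![exp (2 * β), 1, exp (-β), exp (-β)] j / Z₀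
    let q₁ : Fin 4 → ℝ := fun j =>
      ![exp (2 * β), 1, exp (-β + 2 * β * ε), exp (-β - 2 * β * ε)] j / Z₁
    ∑ j, q₁ j * Real.log (q₁ j / q₀ j) ≤ 8 * β ^ 2 * ε ^ 2 * exp (-3 * β + 2 * β * ε) := by
  intro Z₀ Z₁ q₀ q₁
  set t := 2 * β * ε
  have ht0 : 0 ≤ t := by positivity
  let w₀ : Fin 4 → ℝ := ![exp (2 * β), 1, exp (-β), exp (-β)]
  let w₁ : Fin 4 → ℝ := ![exp (2 * β), 1, exp (-β + t), exp (-β - t)]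
  have hZ₁ : exp (2 * β) ≤ Z₁ := by simp only [Z₁]; linarith [exp_pos (-β + t), exp_pos (-β - t)]
  calc ∑ j, q₁ j * Real.log (q₁ j / q₀ j)
      ≤ (∑ j, w₀ j * klFun (w₁ j / w₀ j)) / Z₁ := by
        refine sum_mul_log_normalized_le_sum_mul_klFun (fun i => ?_) (fun i => ?_) ?_ ?_
        · fin_cases i <;> simp [exp_pos]
        · fin_cases i <;> simp [exp_pos]
        · simp only [Fin.sum_univ_four, Matrix.cons_val, Z₀]; ring
        · simp only [Fin.sum_univ_four, Matrix.cons_val, Z₁]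
    _ = exp (-β) * (klFun (exp t) + klFun (exp (-t))) / Z₁ := by
        simp only [Fin.sum_univ_four, Matrix.cons_val, w₀, w₁, ← exp_sub,
          div_self (exp_pos _).ne', div_one, klFun_one]
        ring_nf
    _ ≤ exp (-β) * (t ^ 2 * exp t + t ^ 2 * exp t) / exp (2 * β) := by
        gcongr
        · exact klFun_exp_le_sq_mul_exp ht0
        · exact (klFun_exp_neg_le_sq (by linarith)).trans
            (le_mul_of_one_le_right (sq_nonneg t) (one_le_exp ht0))
    _ = 8 * β ^ 2 * ε ^ 2 * exp (-3 * β + 2 * β * ε) := by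
        rw [show -3 * β + 2 * β * ε = -β + t - 2 * β by ring, exp_sub, exp_add]
        ring
end
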